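/- Let F : ℝ × ℝ^{n×n} → ℝ^{n×n} be continuous, Lipschitz-continuous in its matrix argument uniformly in t, and satisfy F(t, Y)ᵀ = F(t, Yᵀ) for all Y ∈ ℝ^{n×n} and all t. Let U0 ∈ ℝ^{n×r} have orthonormal columns and let S0 ∈ ℝ^{r×r} be symmetric (S0ᵀ = S0). Let K : ℝ → ℝ^{n×r} solve K'(t) = F(t, K(t) U0ᵀ) U0 with K(t0) = U0 S0, and let L : ℝ → ℝ^{n×r} solve L'(t) = F(t, U0 L(t)ᵀ)ᵀ U0 with L(t0) = U0 S0ᵀ, both on [t0, t1]. Then K(t) = L(t) for all t ∈ [t0, t1]. -/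

import Mathlib

/-!
Transposing the L-equation and using `F(t, Y)ᵀ = F(t, Yᵀ)` turns it into
`L' = F(t, L U₀ᵀ) U₀`, the very equation solved by `K`; since `S₀` is symmetric the two
initial values `U₀ S₀` and `U₀ S₀ᵀ` agree. The vector field `X ↦ F(t, X U₀ᵀ) U₀` is
Lipschitz in the Frobenius norm, so uniqueness of solutions of Lipschitz ODEs gives `K = L`.
-/

open Matrix

/-- The Frobenius norm `‖A‖_F = trace(Aᵀ A)^{1/2}`. -/
noncomputable def frobNorm {m n : ℕ} (A : Matrix (Fin m) (Fin n) ℝ) : ℝ :=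
  Real.sqrt (Aᵀ * A).trace

theorem Matrix.hasDerivAt_of_hasDerivAt_apply {𝕜 E : Type*} [NontriviallyNormedField 𝕜]
    [NormedAddCommGroup E] [NormedSpace 𝕜 E] {m n : Type*} [Fintype m] [Fintype n]
    {f : 𝕜 → Matrix m n E} {f' : Matrix m n E} {t : 𝕜}
    (h : ∀ i j, HasDerivAt (fun s => f s i j) (f' i j) t) : HasDerivAt f f' t :=
  hasDerivAt_pi.2 fun i => hasDerivAt_pi.2 fun j => h i j

theorem eqOn_Icc_of_hasDerivAt_of_lipschitzWith {E : Type*} [NormedAddCommGroup E]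
    [NormedSpace ℝ E] {v : ℝ → E → E} {C : NNReal} {f g : ℝ → E} {a b : ℝ}
    (hv : ∀ t, LipschitzWith C (v t))
    (hf : ∀ t ∈ Set.Icc a b, HasDerivAt f (v t (f t)) t)
    (hg : ∀ t ∈ Set.Icc a b, HasDerivAt g (v t (g t)) t) (ha : f a = g a) :
    Set.EqOn f g (Set.Icc a b) :=
  ODE_solution_unique_of_mem_Icc_right (s := fun _ => Set.univ)
    (fun t _ => (hv t).lipschitzOnWith)
    (fun t ht => (hf t ht).continuousAt.continuousWithinAt)
    (fun t ht => (hf t (Set.Ico_subset_Icc_self ht)).hasDerivWithinAt) (fun _ _ => trivial)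
    (fun t ht => (hg t ht).continuousAt.continuousWithinAt)
    (fun t ht => (hg t (Set.Ico_subset_Icc_self ht)).hasDerivWithinAt) (fun _ _ => trivial) ha

/- The Frobenius instances induce the product topology, and `HasDerivAt` depends only on the
topology, so entrywise derivatives remain valid derivatives for the Frobenius norm. -/
attribute [local instance] Matrix.frobeniusNormedAddCommGroup Matrix.frobeniusNormedSpace

theorem frobNorm_eq_norm {m n : ℕ} (A : Matrix (Fin m) (Fin n) ℝ) : frobNorm A = ‖A‖ := by
  rw [frobNorm, frobenius_norm_def, ← Real.sqrt_eq_rpow, trace, Finset.sum_comm]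
  simp [mul_apply, sq]

theorem Matrix.lipschitzWith_mul_right {l m n : Type*} [Fintype l] [Fintype m] [Fintype n]
    (B : Matrix m n ℝ) : LipschitzWith ‖B‖₊ fun X : Matrix l m ℝ => X * B :=
  LipschitzWith.of_dist_le_mul fun X Y => by
    rw [dist_eq_norm, dist_eq_norm, ← Matrix.sub_mul, mul_comm, coe_nnnorm]
    exact frobenius_norm_mul _ _

theorem kStep_eq_lStep_symmetric_general
    {n r : ℕ} {t0 t1 : ℝ}
    (F : ℝ → Matrix (Fin n) (Fin n) ℝ → Matrix (Fin n) (Fin n) ℝ)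
    (hFlip : ∃ C : ℝ, ∀ t Y Z, frobNorm (F t Y - F t Z) ≤ C * frobNorm (Y - Z))
    (hFsym : ∀ t Y, (F t Y)ᵀ = F t Yᵀ)
    (U0 : Matrix (Fin n) (Fin r) ℝ) (S0 : Matrix (Fin r) (Fin r) ℝ)
    (hS0 : S0ᵀ = S0)
    (K L : ℝ → Matrix (Fin n) (Fin r) ℝ)
    (hK0 : K t0 = U0 * S0)
    (hK : ∀ t ∈ Set.Icc t0 t1, ∀ i j,
      HasDerivAt (fun s => K s i j) ((F t (K t * U0ᵀ) * U0) i j) t)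
    (hL0 : L t0 = U0 * S0ᵀ)
    (hL : ∀ t ∈ Set.Icc t0 t1, ∀ i j,
      HasDerivAt (fun s => L s i j) (((F t (U0 * (L t)ᵀ))ᵀ * U0) i j) t) :
    ∀ t ∈ Set.Icc t0 t1, K t = L t := by
  obtain ⟨C, hC⟩ := hFlip
  have hF (t : ℝ) : LipschitzWith C.toNNReal (F t) :=
    LipschitzWith.of_dist_le' fun Y Z => by
      simpa only [dist_eq_norm, ← frobNorm_eq_norm] using hC t Y Z
  have hv (t : ℝ) : LipschitzWith _ fun X : Matrix (Fin n) (Fin r) ℝ => F t (X * U0ᵀ) * U0 :=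
    (lipschitzWith_mul_right U0).comp ((hF t).comp (lipschitzWith_mul_right U0ᵀ))
  have hL_eq_kStep (t : ℝ) : (F t (U0 * (L t)ᵀ))ᵀ * U0 = F t (L t * U0ᵀ) * U0 := by
    rw [hFsym, transpose_mul, transpose_transpose]
  refine fun t ht => eqOn_Icc_of_hasDerivAt_of_lipschitzWith hv
    (fun s hs => hasDerivAt_of_hasDerivAt_apply (hK s hs))
    (fun s hs => hasDerivAt_of_hasDerivAt_apply ?_) (by rw [hK0, hL0, hS0]) ht
  simpa only [hL_eq_kStep] using hL s hs

/-- Key step of the symmetry-preservation proof (Theorem 3): under the symmetry condition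
`F(t,Y)ᵀ = F(t,Yᵀ)`, with symmetric `S₀` and orthonormal `U₀`, the K-step and L-step of the
rank-adaptive integrator produce identical results. -/
theorem kStep_eq_lStep_symmetric
    {n r : ℕ} {t0 t1 : ℝ}
    (F : ℝ → Matrix (Fin n) (Fin n) ℝ → Matrix (Fin n) (Fin n) ℝ)
    (hFcont : Continuous fun p : ℝ × Matrix (Fin n) (Fin n) ℝ => F p.1 p.2)
    (hFlip : ∃ C : ℝ, ∀ t Y Z, frobNorm (F t Y - F t Z) ≤ C * frobNorm (Y - Z))
    (hFsym : ∀ t Y, (F t Y)ᵀ = F t Yᵀ)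
    (U0 : Matrix (Fin n) (Fin r) ℝ) (S0 : Matrix (Fin r) (Fin r) ℝ)
    (hU0 : U0ᵀ * U0 = 1) (hS0 : S0ᵀ = S0)
    (K L : ℝ → Matrix (Fin n) (Fin r) ℝ)
    (hK0 : K t0 = U0 * S0)
    (hK : ∀ t ∈ Set.Icc t0 t1, ∀ i j,
      HasDerivAt (fun s => K s i j) ((F t (K t * U0ᵀ) * U0) i j) t)
    (hL0 : L t0 = U0 * S0ᵀ)
    (hL : ∀ t ∈ Set.Icc t0 t1, ∀ i j,
      HasDerivAt (fun s => L s i j) (((F t (U0 * (L t)ᵀ))ᵀ * U0) i j) t) :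
    ∀ t ∈ Set.Icc t0 t1, K t = L t :=
  kStep_eq_lStep_symmetric_general F hFlip hFsym U0 S0 hS0 K L hK0 hK hL0 hL
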